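/- arXiv:2401.01174 — 3 statements merged into one kernel-verified Lean document; each statement's English description precedes it below -/
import Mathlib

section
/- Let L be a Lie superalgebra generated by a set of homogeneous elements a_1, ..., a_n, and let c be any Lie product (with arbitrary order and bracketing) involving each of a_1, ..., a_n exactly once. Then c is a Z-linear combination of left-normed Lie products [a_1, a_{2σ}, a_{3σ}, ..., a_{nσ}] where σ ranges over permutations of {2,3,...,n}. -/
/-- A Lie superalgebra over a commutative ring `R`: a `ℤ/2`-graded `R`-module
`L = L₀ ⊕ L₁` with a bilinear bracket respecting the grading, satisfying graded
antisymmetry, the graded Jacobi identity, `[a,a] = 0` for even `a` and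
`[[a,a],a] = 0` for odd `a`. -/
structure LieSuperalgebra (R : Type*) (L : Type*) [CommRing R] [AddCommGroup L]
    [Module R L] where
  br : L →ₗ[R] L →ₗ[R] L
  grade : ZMod 2 → Submodule R L
  sup_grade : grade 0 ⊔ grade 1 = ⊤
  disjoint_grade : grade 0 ⊓ grade 1 = ⊥
  grade_br : ∀ (i j : ZMod 2) (a b : L), a ∈ grade i → b ∈ grade j → br a b ∈ grade (i + j)
  antisymm : ∀ (i j : ZMod 2) (a b : L), a ∈ grade i → b ∈ grade j →
    br b a = -((-1 : R) ^ (i.val * j.val)) • br a b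
  jacobi : ∀ (i j k : ZMod 2) (a b c : L), a ∈ grade i → b ∈ grade j → c ∈ grade k →
    ((-1 : R) ^ (i.val * k.val)) • br a (br b c) + ((-1 : R) ^ (j.val * i.val)) • br b (br c a)
      + ((-1 : R) ^ (k.val * j.val)) • br c (br a b) = 0
  even_sq : ∀ a ∈ grade 0, br a a = 0
  odd_cube : ∀ a ∈ grade 1, br (br a a) a = 0

/-- `IsLieWord S a s c` means `c` is a Lie product, in some order and with some
bracketing, of the elements `a i` for `i ∈ s`, each occurring exactly once. -/
inductive IsLieWord {R L : Type*} [CommRing R] [AddCommGroup L] [Module R L]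
    (S : LieSuperalgebra R L) {n : ℕ} (a : Fin n → L) : Finset (Fin n) → L → Prop
  | single (i : Fin n) : IsLieWord S a {i} (a i)
  | mul {s t : Finset (Fin n)} {u v : L} : Disjoint s t →
      IsLieWord S a s u → IsLieWord S a t v → IsLieWord S a (s ∪ t) (S.br u v)

namespace LieAux

lemma pow_add_val (R : Type*) [CommRing R] (i j k : ZMod 2) :
    ((-1:R)^((i+j).val * k.val)) = (-1:R)^(i.val*k.val) * (-1:R)^(j.val*k.val) := by
  rw [ZMod.val_add]
  fin_cases i <;> fin_cases j <;> fin_cases k <;>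
    norm_num [ZMod.val, show ZMod.val (2 : ZMod 2) = 0 by decide,
      show ZMod.val (1 : ZMod 2) = 1 by decide, show ZMod.val (0 : ZMod 2) = 0 by decide]

lemma pow_mul_self (R : Type*) [CommRing R] (i j : ZMod 2) :
    ((-1:R)^(i.val * j.val)) * ((-1:R)^(i.val * j.val)) = 1 := by
  fin_cases i <;> fin_cases j <;>
    norm_num [ZMod.val, show ZMod.val (1 : ZMod 2) = 1 by decide, show ZMod.val (0 : ZMod 2) = 0 by decide]

variable {R L : Type*} [CommRing R] [AddCommGroup L] [Module R L]

lemma neg_one_pow_smul (m : ℕ) (x : L) : ((-1:R)^m) • x = ((-1:ℤ)^m) • x := by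
  rw [← Int.cast_smul_eq_zsmul R]; push_cast; ring_nf

lemma jacobi' (S : LieSuperalgebra R L) {i j k : ZMod 2} {x y z : L}
    (hx : x ∈ S.grade i) (hy : y ∈ S.grade j) (hz : z ∈ S.grade k) :
    S.br x (S.br y z) = S.br (S.br x y) z - ((-1 : R) ^ (j.val * k.val)) • S.br (S.br x z) y := by
  have J := S.jacobi i j k x y z hx hy hz
  have h1 : S.br z x = -((-1 : R) ^ (i.val * k.val)) • S.br x z := S.antisymm i k x z hx hz
  have h2 : S.br y (S.br x z) = -((-1 : R) ^ ((i + k).val * j.val)) • S.br (S.br x z) y :=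
    S.antisymm (i + k) j (S.br x z) y (S.grade_br i k x z hx hz) hy
  have h3 : S.br z (S.br x y) = -((-1 : R) ^ ((i + j).val * k.val)) • S.br (S.br x y) z :=
    S.antisymm (i + j) k (S.br x y) z (S.grade_br i j x y hx hy) hz
  rw [h1, map_smul, h2, h3, pow_add_val, pow_add_val] at J
  fin_cases i <;> fin_cases j <;> fin_cases k <;>
    norm_num [ZMod.val, show ZMod.val (1 : ZMod 2) = 1 by decide,
      show ZMod.val (0 : ZMod 2) = 0 by decide] at J ⊢ <;>
    first
      | linear_combination (norm := module) J
      | linear_combination (norm := module) -J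

variable (S : LieSuperalgebra R L) {n : ℕ} (a : Fin n → L)

/-- The left-normed product of `a i` over a list of indices. -/
def leftnorm : List (Fin n) → L
  | [] => 0
  | (h :: t) => t.foldl (fun u j => S.br u (a j)) (a h)

lemma leftnorm_concat {l : List (Fin n)} (hl : l ≠ []) (j : Fin n) :
    leftnorm S a (l ++ [j]) = S.br (leftnorm S a l) (a j) := by
  cases l with
  | nil => exact absurd rfl hl
  | cons h t => simp [leftnorm, List.foldl_append]

/-- Span of left-normed products over lists with support `s` and head satisfying `hd`. -/
def WSpan (hd : Fin n → Prop) (s : Finset (Fin n)) : Submodule ℤ L :=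
  Submodule.span ℤ {x : L | ∃ l : List (Fin n), l.Nodup ∧ l.toFinset = s ∧
    (∃ h tl, l = h :: tl ∧ hd h) ∧ x = leftnorm S a l}

lemma grade_word (d : Fin n → ZMod 2) (hgr : ∀ i, a i ∈ S.grade (d i))
    {s : Finset (Fin n)} {c : L} (hc : IsLieWord S a s c) :
    c ∈ S.grade (∑ i ∈ s, d i) := by
  induction hc with
  | single i => simpa using hgr i
  | mul hdis hu hv ihu ihv =>
      rw [Finset.sum_union hdis]
      exact S.grade_br _ _ _ _ ihu ihv

lemma leftnorm_isLieWord {l : List (Fin n)} (hnd : l.Nodup) (hne : l ≠ []) :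
    IsLieWord S a l.toFinset (leftnorm S a l) := by
  induction l using List.reverseRecOn with
  | nil => exact absurd rfl hne
  | append_singleton l j ih =>
      rcases eq_or_ne l [] with rfl | hl
      · simpa [leftnorm] using IsLieWord.single (S := S) (a := a) j
      · rw [List.nodup_append] at hnd
        have hj : j ∉ l := fun hmem => hnd.2.2 j hmem j (List.mem_singleton_self j) rfl
        have hdis : Disjoint l.toFinset ({j} : Finset (Fin n)) := by
          simp [Finset.disjoint_singleton_right, hj]
        have hw := IsLieWord.mul hdis (ih hnd.1 hl) (IsLieWord.single (S := S) (a := a) j)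
        rw [leftnorm_concat S a hl j]
        simpa using hw

lemma WSpan_le_grade (d : Fin n → ZMod 2) (hgr : ∀ i, a i ∈ S.grade (d i))
    (hd : Fin n → Prop) (s : Finset (Fin n)) :
    WSpan S a hd s ≤ (S.grade (∑ i ∈ s, d i)).restrictScalars ℤ := by
  rw [WSpan, Submodule.span_le]
  rintro x ⟨l, hnd, rfl, ⟨h, tl, rfl, -⟩, rfl⟩
  exact grade_word S a d hgr (leftnorm_isLieWord S a hnd (List.cons_ne_nil h tl))

lemma key (d : Fin n → ZMod 2) (hgr : ∀ i, a i ∈ S.grade (d i)) (hd : Fin n → Prop)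
    {t : Finset (Fin n)} {v : L} (hv : IsLieWord S a t v) :
    ∀ s : Finset (Fin n), Disjoint s t → ∀ u ∈ WSpan S a hd s,
      S.br u v ∈ WSpan S a hd (s ∪ t) := by
  induction hv with
  | single j =>
      intro s hdis u hu
      have hjs : j ∉ s := by simpa [Finset.disjoint_singleton_right] using hdis
      let f : L →ₗ[R] L := S.br.flip (a j)
      have hf : ∀ w, f w = S.br w (a j) := fun w => rfl
      show f u ∈ WSpan S a hd (s ∪ {j})
      refine Submodule.span_induction ?_ ?_ ?_ ?_ hu
      · rintro x ⟨l, hnd, rfl, ⟨h, tl, rfl, hh⟩, rfl⟩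
        have hjl : j ∉ (h :: tl) := by
          intro hmem
          exact hjs (by simpa using List.mem_toFinset.mpr hmem)
        refine Submodule.subset_span ⟨(h :: tl) ++ [j], ?_, by simp, ⟨h, tl ++ [j], by simp, hh⟩, ?_⟩
        · rw [List.nodup_append]
          refine ⟨hnd, List.nodup_singleton j, ?_⟩
          intro x hx y hy hxj
          rw [List.mem_singleton] at hy
          subst hxj hy
          exact hjl hx
        · rw [hf, leftnorm_concat S a (List.cons_ne_nil h tl) j]
      · simp
      · intro x y _ _ hx hy
        rw [map_add]
        exact add_mem hx hy
      · intro m x _ hx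
        rw [map_zsmul]
        exact Submodule.smul_mem _ m hx
  | mul hdis' hv1 hv2 ih1 ih2 =>
      rename_i t1 t2 v1 v2
      intro s hdis u hu
      rw [Finset.disjoint_union_right] at hdis
      have hugr : u ∈ S.grade (∑ i ∈ s, d i) := WSpan_le_grade S a d hgr hd s hu
      have h1 : v1 ∈ S.grade (∑ i ∈ t1, d i) := grade_word S a d hgr hv1
      have h2 : v2 ∈ S.grade (∑ i ∈ t2, d i) := grade_word S a d hgr hv2
      rw [jacobi' S hugr h1 h2]
      have X1 := ih1 s hdis.1 u hu
      have X2 := ih2 (s ∪ t1) (Finset.disjoint_union_left.mpr ⟨hdis.2, hdis'⟩) _ X1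
      have Y1 := ih2 s hdis.2 u hu
      have Y2 := ih1 (s ∪ t2) (Finset.disjoint_union_left.mpr ⟨hdis.1, hdis'.symm⟩) _ Y1
      rw [Finset.union_right_comm, Finset.union_assoc] at Y2
      rw [Finset.union_assoc] at X2
      refine sub_mem X2 ?_
      rw [neg_one_pow_smul]
      exact Submodule.smul_mem _ _ Y2

lemma allWords (d : Fin n → ZMod 2) (hgr : ∀ i, a i ∈ S.grade (d i)) (z : Fin n)
    {s : Finset (Fin n)} {c : L} (hc : IsLieWord S a s c) :
    c ∈ WSpan S a (fun _ => True) s ∧ (z ∈ s → c ∈ WSpan S a (fun h => h = z) s) := by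
  induction hc with
  | single i =>
      constructor
      · exact Submodule.subset_span ⟨[i], by simp, by simp, ⟨i, [], rfl, trivial⟩, rfl⟩
      · intro hz
        have hiz : z = i := by simpa using hz
        exact Submodule.subset_span ⟨[i], by simp, by simp, ⟨i, [], rfl, hiz.symm⟩, rfl⟩
  | mul hdis hu hv ihu ihv =>
      rename_i s t u v
      refine ⟨key S a d hgr _ hv s hdis u ihu.1, ?_⟩
      intro hz
      rcases Finset.mem_union.mp hz with hzs | hzt
      · exact key S a d hgr _ hv s hdis u (ihu.2 hzs)
      · have hvu := key S a d hgr (fun h => h = z) hu t hdis.symm v (ihv.2 hzt)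
        rw [Finset.union_comm t s] at hvu
        have hanti := S.antisymm (∑ i ∈ s, d i) (∑ i ∈ t, d i) u v
          (grade_word S a d hgr hu) (grade_word S a d hgr hv)
        have hself := pow_mul_self R (∑ i ∈ s, d i) (∑ i ∈ t, d i)
        have huv : S.br u v =
            -((-1 : R) ^ ((∑ i ∈ s, d i).val * (∑ i ∈ t, d i).val)) • S.br v u := by
          rw [hanti, smul_smul, neg_mul_neg, hself, one_smul]
        rw [huv, neg_smul, neg_one_pow_smul]
        exact Submodule.neg_mem _ (Submodule.smul_mem _ _ hvu)

end LieAux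

open LieAux

/-- Any Lie product of homogeneous elements `a 0, …, a (n-1)`, each occurring exactly
once, is a `ℤ`-linear combination of left-normed products
`[a 0, a (σ 1), …, a (σ (n-1))]` with `σ` a permutation fixing `0`. -/
theorem lie_product_leftnormed_span {R L : Type*} [CommRing R] [AddCommGroup L]
    [Module R L] (S : LieSuperalgebra R L) {n : ℕ} (hn : 0 < n) (a : Fin n → L)
    (hhom : ∀ i, ∃ d, a i ∈ S.grade d) (c : L)
    (hc : IsLieWord S a Finset.univ c) :
    c ∈ Submodule.span ℤ {x : L | ∃ σ : Equiv.Perm (Fin n), σ ⟨0, hn⟩ = ⟨0, hn⟩ ∧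
      x = (List.ofFn fun i => a (σ i)).tail.foldl (fun u v => S.br u v) (a ⟨0, hn⟩)} := by
  choose d hgr using hhom
  set z : Fin n := ⟨0, hn⟩ with hzdef
  have hc0 : c ∈ WSpan S a (fun h => h = z) Finset.univ :=
    (allWords S a d hgr z hc).2 (Finset.mem_univ z)
  refine SetLike.le_def.mp ?_ hc0
  rw [WSpan, Submodule.span_le]
  rintro x ⟨l, hnd, htf, ⟨h0, tl, rfl, rfl⟩, rfl⟩
  have hlen : (z :: tl).length = n := by
    rw [← List.toFinset_card_of_nodup hnd, htf, Finset.card_univ, Fintype.card_fin]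
  have hinj : Function.Injective (fun i : Fin n => (z :: tl).get (Fin.cast hlen.symm i)) :=
    (List.nodup_iff_injective_get.mp hnd).comp (Fin.cast_injective hlen.symm)
  let σ : Equiv.Perm (Fin n) :=
    Equiv.ofBijective _ (Finite.injective_iff_bijective.mp hinj)
  have hσ : ∀ i : Fin n, σ i = (z :: tl).get (Fin.cast hlen.symm i) := fun i => rfl
  have hσ0 : σ z = z := by
    rw [hσ]
    have he : (Fin.cast hlen.symm z) = (⟨0, by omega⟩ : Fin (z :: tl).length) := rfl
    rw [he]
    exact List.get_cons_zero
  refine Submodule.subset_span ⟨σ, hσ0, ?_⟩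
  have hofn : (List.ofFn fun i => a (σ i)) = (z :: tl).map a := by
    apply List.ext_getElem (by simp [← hlen])
    intro i h1 h2
    simp only [List.getElem_ofFn, List.getElem_map, hσ, List.get_eq_getElem, Fin.coe_cast]
  rw [hofn]
  show leftnorm S a (z :: tl) = _
  simp only [List.map_cons, List.tail_cons]
  rw [List.foldl_map]
  rfl
end

section
/- Let L be a Lie superalgebra over a commutative ring R with 1, generated by a set A of homogeneous elements, and let C be a complete set of basic commutators on A. Then the set C ∪ {[c,c] : c ∈ C is odd} spans L as an R-module. -/
/-- The weight (number of leaves) of a formal bracketing. -/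
def FreeMagma.wt {A : Type*} : FreeMagma A → ℕ
  | .of _ => 1
  | .mul s t => s.wt + t.wt

/-- A complete set of basic commutators (as formal bracketings) on an ordered set `A`,
in the sense of P. Hall: the set `B` together with a linear order `le` on it which
extends the order of the generators, places commutators of smaller weight first,
and such that `[c,d] ∈ B` iff `c, d ∈ B`, `c > d`, and whenever `c = [e,f]`
one has `f ≤ d`. -/
structure HallData (A : Type*) [LinearOrder A] where
  B : Set (FreeMagma A)
  le : FreeMagma A → FreeMagma A → Prop
  le_refl : ∀ t ∈ B, le t t
  le_trans : ∀ s ∈ B, ∀ t ∈ B, ∀ u ∈ B, le s t → le t u → le s u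
  le_antisymm : ∀ s ∈ B, ∀ t ∈ B, le s t → le t s → s = t
  le_total : ∀ s ∈ B, ∀ t ∈ B, le s t ∨ le t s
  wt_mono : ∀ s ∈ B, ∀ t ∈ B, s.wt < t.wt → le s t ∧ s ≠ t
  le_of : ∀ a b : A, le (.of a) (.of b) ↔ a ≤ b
  of_mem : ∀ a : A, FreeMagma.of a ∈ B
  mul_mem : ∀ s t : FreeMagma A, FreeMagma.mul s t ∈ B ↔
    s ∈ B ∧ t ∈ B ∧ (le t s ∧ t ≠ s) ∧ ∀ e f, s = FreeMagma.mul e f → le f t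

/-- Evaluation of a formal bracketing in a Lie superalgebra, sending leaves to the
given generators. -/
def evalMagma {R L A : Type*} [CommRing R] [AddCommGroup L] [Module R L]
    (S : LieSuperalgebra R L) (g : A → L) : FreeMagma A → L
  | .of a => g a
  | .mul s t => S.br (evalMagma S g s) (evalMagma S g t)


namespace BCSpan

open Submodule

variable {R L A : Type*} [CommRing R] [AddCommGroup L] [Module R L] [LinearOrder A]

/-- The set of leaves of a formal bracketing. -/
def lvs : FreeMagma A → Finset A
  | .of a => {a}
  | .mul s t => lvs s ∪ lvs t

@[simp] lemma wt_of (a : A) : (FreeMagma.of a).wt = 1 := rfl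
@[simp] lemma wt_mul (s t : FreeMagma A) : (FreeMagma.mul s t).wt = s.wt + t.wt := rfl
@[simp] lemma lvs_of (a : A) : lvs (FreeMagma.of a) = {a} := rfl
@[simp] lemma lvs_mul (s t : FreeMagma A) : lvs (FreeMagma.mul s t) = lvs s ∪ lvs t := rfl

set_option linter.unusedSectionVars false
set_option linter.unusedVariables false

lemma wt_pos (t : FreeMagma A) : 0 < t.wt := by
  induction t with
  | ih1 a => simp
  | ih2 s t ihs iht => exact Nat.add_pos_left ihs _

lemma finite_trees (n : ℕ) (Sf : Finset A) :
    {t : FreeMagma A | t.wt ≤ n ∧ lvs t ⊆ Sf}.Finite := by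
  induction n with
  | zero =>
    apply Set.finite_empty.subset
    rintro t ⟨h1, -⟩
    have := wt_pos t
    omega
  | succ n ih =>
    apply Set.Finite.subset
      ((Sf.finite_toSet.image FreeMagma.of).union (Set.Finite.image2 FreeMagma.mul ih ih))
    rintro t ⟨h1, h2⟩
    cases t with
    | of a =>
      left
      exact ⟨a, by simpa using h2, rfl⟩
    | mul s u =>
      right
      have hs := wt_pos s
      have hu := wt_pos u
      simp only [wt_mul] at h1
      simp only [lvs_mul, Finset.union_subset_iff] at h2
      exact Set.mem_image2_of_mem ⟨by omega, h2.1⟩ ⟨by omega, h2.2⟩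

/-- strict order associated to Hall data -/
def hlt (H : HallData A) (a b : FreeMagma A) : Prop := H.le a b ∧ a ≠ b

section Hall

variable (H : HallData A)

lemma hlt_trans {a b c : FreeMagma A} (ha : a ∈ H.B) (hb : b ∈ H.B) (hc : c ∈ H.B)
    (h1 : hlt H a b) (h2 : hlt H b c) : hlt H a c := by
  refine ⟨H.le_trans a ha b hb c hc h1.1 h2.1, ?_⟩
  rintro rfl
  exact h1.2 (H.le_antisymm a ha b hb h1.1 h2.1)

lemma hle_hlt_trans {a b c : FreeMagma A} (ha : a ∈ H.B) (hb : b ∈ H.B) (hc : c ∈ H.B)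
    (h1 : H.le a b) (h2 : hlt H b c) : hlt H a c := by
  refine ⟨H.le_trans a ha b hb c hc h1 h2.1, ?_⟩
  rintro rfl
  exact h2.2 (H.le_antisymm b hb a ha h2.1 h1)

lemma hlt_of_wt {a b : FreeMagma A} (ha : a ∈ H.B) (hb : b ∈ H.B) (h : a.wt < b.wt) :
    hlt H a b :=
  ⟨(H.wt_mono a ha b hb h).1, (H.wt_mono a ha b hb h).2⟩

lemma hlt_total {a b : FreeMagma A} (ha : a ∈ H.B) (hb : b ∈ H.B) (h : a ≠ b) :
    hlt H a b ∨ hlt H b a := by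
  rcases H.le_total a ha b hb with h1 | h1
  · exact Or.inl ⟨h1, h⟩
  · exact Or.inr ⟨h1, h.symm⟩

lemma wt_le_of_hlt {a b : FreeMagma A} (ha : a ∈ H.B) (hb : b ∈ H.B) (h : hlt H a b) :
    a.wt ≤ b.wt := by
  by_contra hc
  push_neg at hc
  exact h.2 (H.le_antisymm a ha b hb h.1 (hlt_of_wt H hb ha hc).1)

/-- count of basics above `d` with bounded weight and leaves -/
noncomputable def Acnt (n : ℕ) (Sf : Finset A) (d : FreeMagma A) : ℕ :=
  {t : FreeMagma A | t ∈ H.B ∧ t.wt ≤ n ∧ lvs t ⊆ Sf ∧ hlt H d t}.ncard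

end Hall

noncomputable def Tcnt (n : ℕ) (Sf : Finset A) : ℕ :=
  {t : FreeMagma A | t.wt ≤ n ∧ lvs t ⊆ Sf}.ncard

section Hall2

variable (H : HallData A)

lemma Aset_finite (n : ℕ) (Sf : Finset A) (d : FreeMagma A) :
    {t : FreeMagma A | t ∈ H.B ∧ t.wt ≤ n ∧ lvs t ⊆ Sf ∧ hlt H d t}.Finite :=
  (finite_trees n Sf).subset (fun t ht => ⟨ht.2.1, ht.2.2.1⟩)

lemma Acnt_lt {n : ℕ} {Sf : Finset A} {d d' : FreeMagma A} (hd : d ∈ H.B) (hd' : d' ∈ H.B)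
    (hw : d'.wt ≤ n) (hl : lvs d' ⊆ Sf) (h : hlt H d d') :
    Acnt H n Sf d' < Acnt H n Sf d := by
  apply Set.ncard_lt_ncard ?_ (Aset_finite H n Sf d)
  rw [ssubset_iff_subset_ne]
  constructor
  · rintro t ⟨h1, h2, h3, h4⟩
    exact ⟨h1, h2, h3, hlt_trans H hd hd' h1 h h4⟩
  · intro he
    have hmem : d' ∈ {t : FreeMagma A | t ∈ H.B ∧ t.wt ≤ n ∧ lvs t ⊆ Sf ∧ hlt H d t} :=
      ⟨hd', hw, hl, h⟩
    rw [← he] at hmem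
    exact hmem.2.2.2.2 rfl

lemma Acnt_le_Tcnt (n : ℕ) (Sf : Finset A) (d : FreeMagma A) :
    Acnt H n Sf d ≤ Tcnt n Sf :=
  Set.ncard_le_ncard (fun t ht => ⟨ht.2.1, ht.2.2.1⟩) (finite_trees n Sf)

end Hall2

/-- parity of a tree given parities of the leaves -/
def dgAux (δ : A → ZMod 2) : FreeMagma A → ZMod 2
  | .of a => δ a
  | .mul s t => dgAux δ s + dgAux δ t

lemma zmod2_cases (x : ZMod 2) : x = 0 ∨ x = 1 := by revert x; decide

section Super

variable (S : LieSuperalgebra R L) (g : A → L)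

@[simp] lemma eval_of (a : A) : evalMagma S g (FreeMagma.of a) = g a := rfl
@[simp] lemma eval_mul (s t : FreeMagma A) :
    evalMagma S g (FreeMagma.mul s t) = S.br (evalMagma S g s) (evalMagma S g t) := rfl

lemma homog (δ : A → ZMod 2) (hδ : ∀ a, g a ∈ S.grade (δ a)) :
    ∀ t : FreeMagma A, evalMagma S g t ∈ S.grade (dgAux δ t)
  | .of a => hδ a
  | .mul s t => S.grade_br _ _ _ _ (homog δ hδ s) (homog δ hδ t)

lemma unit_smul_mem (W : Submodule R L) (m : ℕ) {x : L} (h : ((-1 : R) ^ m) • x ∈ W) :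
    x ∈ W := by
  have h2 := W.smul_mem ((-1 : R) ^ m) h
  rwa [smul_smul, ← pow_add, Even.neg_one_pow ⟨m, rfl⟩, one_smul] at h2

lemma swap_mem (W : Submodule R L) {i j : ZMod 2} {a b : L} (ha : a ∈ S.grade i)
    (hb : b ∈ S.grade j) (h : S.br a b ∈ W) : S.br b a ∈ W := by
  rw [S.antisymm i j a b ha hb, neg_smul]
  exact W.neg_mem (W.smul_mem _ h)

lemma jac3 (W : Submodule R L) {i j k : ZMod 2} {a b c : L} (ha : a ∈ S.grade i)
    (hb : b ∈ S.grade j) (hc : c ∈ S.grade k) (h1 : S.br a (S.br b c) ∈ W)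
    (h2 : S.br b (S.br c a) ∈ W) : S.br c (S.br a b) ∈ W := by
  have hj := S.jacobi i j k a b c ha hb hc
  have h3 : ((-1 : R) ^ (k.val * j.val)) • S.br c (S.br a b)
      = -(((-1 : R) ^ (i.val * k.val)) • S.br a (S.br b c)
          + ((-1 : R) ^ (j.val * i.val)) • S.br b (S.br c a)) :=
    eq_neg_of_add_eq_zero_right hj
  apply unit_smul_mem W (k.val * j.val)
  rw [h3]
  exact W.neg_mem (W.add_mem (W.smul_mem _ h1) (W.smul_mem _ h2))

lemma sq_grade {a : L} (ha : a ∈ S.grade 1) : S.br a a ∈ S.grade 0 := by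
  have := S.grade_br 1 1 a a ha ha
  rwa [show (1 + 1 : ZMod 2) = 0 from by decide] at this

lemma cube_zero {a : L} (ha : a ∈ S.grade 1) : S.br a (S.br a a) = 0 := by
  rw [S.antisymm 0 1 (S.br a a) a (sq_grade S ha) ha, S.odd_cube a ha, smul_zero]

lemma br_right (W : Submodule R L) {T : Set L} {x y : L} (hy : y ∈ Submodule.span R T)
    (h : ∀ z ∈ T, S.br x z ∈ W) : S.br x y ∈ W := by
  induction hy using Submodule.span_induction with
  | mem z hz => exact h z hz
  | zero => simp
  | add a b _ _ ha hb => rw [map_add]; exact W.add_mem ha hb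
  | smul r a _ ha => rw [map_smul]; exact W.smul_mem r ha

lemma br_left (W : Submodule R L) {T : Set L} {x y : L} (hy : y ∈ Submodule.span R T)
    (h : ∀ z ∈ T, S.br z x ∈ W) : S.br y x ∈ W := by
  induction hy using Submodule.span_induction with
  | mem z hz => exact h z hz
  | zero => simp
  | add a b _ _ ha hb =>
    rw [map_add, LinearMap.add_apply]
    exact W.add_mem ha hb
  | smul r a _ ha =>
    rw [map_smul, LinearMap.smul_apply]
    exact W.smul_mem r ha

variable (H : HallData A)

def gB (n : ℕ) (Sf : Finset A) : Set L :=
  {x | ∃ b, b ∈ H.B ∧ FreeMagma.wt b = n ∧ lvs b ⊆ Sf ∧ x = evalMagma S g b}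

def gQ (n : ℕ) (Sf : Finset A) : Set L :=
  {x | ∃ c, c ∈ H.B ∧ evalMagma S g c ∈ S.grade 1 ∧ 2 * FreeMagma.wt c = n ∧ lvs c ⊆ Sf ∧
    x = S.br (evalMagma S g c) (evalMagma S g c)}

def gQd (n : ℕ) (Sf : Finset A) (d : FreeMagma A) : Set L :=
  {x | ∃ c, c ∈ H.B ∧ evalMagma S g c ∈ S.grade 1 ∧ 2 * FreeMagma.wt c = n ∧ lvs c ⊆ Sf ∧
    hlt H d c ∧ x = S.br (evalMagma S g c) (evalMagma S g c)}

noncomputable def VV (n : ℕ) (Sf : Finset A) : Submodule R L :=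
  Submodule.span R (gB S g H n Sf ∪ gQ S g H n Sf)

noncomputable def V2 (n : ℕ) (Sf : Finset A) (d : FreeMagma A) : Submodule R L :=
  Submodule.span R (gB S g H n Sf ∪ gQd S g H n Sf d)

lemma V2_le_VV (n : ℕ) (Sf : Finset A) (d : FreeMagma A) :
    V2 S g H n Sf d ≤ VV S g H n Sf := by
  apply Submodule.span_mono
  apply Set.union_subset_union subset_rfl
  rintro x ⟨c, h1, h2, h3, h4, _, h6⟩
  exact ⟨c, h1, h2, h3, h4, h6⟩

lemma V2_mono {n : ℕ} {Sf : Finset A} {d d' : FreeMagma A}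
    (h : ∀ c, c ∈ H.B → hlt H d' c → hlt H d c) :
    V2 S g H n Sf d' ≤ V2 S g H n Sf d := by
  apply Submodule.span_mono
  apply Set.union_subset_union subset_rfl
  rintro x ⟨c, h1, h2, h3, h4, h5, h6⟩
  exact ⟨c, h1, h2, h3, h4, h c h1 h5, h6⟩


theorem master (δ : A → ZMod 2) (hδ : ∀ a, g a ∈ S.grade (δ a)) (n : ℕ) :
    ∀ (k : ℕ) (Sf : Finset A),
    (∀ s t : FreeMagma A, s ∈ H.B → t ∈ H.B → hlt H t s → lvs s ⊆ Sf → lvs t ⊆ Sf →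
      s.wt + t.wt = n → 3 * Acnt H n Sf t ≤ k →
      S.br (evalMagma S g s) (evalMagma S g t) ∈ V2 S g H n Sf t)
    ∧ (∀ x c d : FreeMagma A, x ∈ H.B → c ∈ H.B → d ∈ H.B → evalMagma S g c ∈ S.grade 1 →
      hlt H c x → H.le d c → lvs x ⊆ Sf → lvs c ⊆ Sf → x.wt + 2 * c.wt = n →
      3 * Acnt H n Sf c + 2 ≤ k →
      S.br (evalMagma S g x) (S.br (evalMagma S g c) (evalMagma S g c)) ∈ V2 S g H n Sf d)
    ∧ (∀ x c d : FreeMagma A, x ∈ H.B → c ∈ H.B → d ∈ H.B → evalMagma S g c ∈ S.grade 1 →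
      hlt H x c → H.le d x → lvs x ⊆ Sf → lvs c ⊆ Sf → x.wt + 2 * c.wt = n →
      3 * Acnt H n Sf x + 1 ≤ k →
      S.br (evalMagma S g x) (S.br (evalMagma S g c) (evalMagma S g c)) ∈ V2 S g H n Sf d)
    ∧ (∀ c c' : FreeMagma A, c ∈ H.B → c' ∈ H.B → evalMagma S g c ∈ S.grade 1 →
      evalMagma S g c' ∈ S.grade 1 → lvs c ⊆ Sf → lvs c' ⊆ Sf → 2 * c.wt + 2 * c'.wt = n →
      3 * Acnt H n Sf c + 3 * Acnt H n Sf c' ≤ k →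
      S.br (S.br (evalMagma S g c) (evalMagma S g c))
        (S.br (evalMagma S g c') (evalMagma S g c')) ∈ VV S g H n Sf)
    ∧ (∀ u : FreeMagma A, u.wt = n → lvs u ⊆ Sf → 6 * Tcnt n Sf + 3 ≤ k →
      evalMagma S g u ∈ VV S g H n Sf) := by
  have hom : ∀ t : FreeMagma A, evalMagma S g t ∈ S.grade (dgAux δ t) := homog S g δ hδ
  induction n using Nat.strong_induction_on with
  | _ n ihn =>
  intro k
  induction k using Nat.strong_induction_on with
  | _ k ihk =>
  intro Sf
  -- Component 1 : brackets of two basics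
  have hP1 : ∀ s t : FreeMagma A, s ∈ H.B → t ∈ H.B → hlt H t s → lvs s ⊆ Sf → lvs t ⊆ Sf →
      s.wt + t.wt = n → 3 * Acnt H n Sf t ≤ k →
      S.br (evalMagma S g s) (evalMagma S g t) ∈ V2 S g H n Sf t := by
    intro s t hs ht hts hls hlt2 hn hk
    by_cases hC : ∀ e f, s = FreeMagma.mul e f → H.le f t
    · apply Submodule.subset_span
      left
      refine ⟨FreeMagma.mul s t, (H.mul_mem s t).mpr ⟨hs, ht, ⟨hts.1, hts.2⟩, hC⟩,
        by simpa only [wt_mul] using hn, by simp only [lvs_mul]; exact Finset.union_subset hls hlt2,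
        (eval_mul S g s t).symm⟩
    · push_neg at hC
      obtain ⟨e, f, hse, hft⟩ := hC
      subst hse
      rw [eval_mul]
      obtain ⟨he, hf, hfe0, hcond⟩ := (H.mul_mem e f).mp hs
      have hfe : hlt H f e := ⟨hfe0.1, hfe0.2⟩
      have htf : hlt H t f := by
        rcases H.le_total t ht f hf with h1 | h1
        · exact ⟨h1, fun h2 => hft (by rw [← h2]; exact H.le_refl t ht)⟩
        · exact absurd h1 hft
      have hte : hlt H t e := hlt_trans H ht hf he htf hfe
      have hwfe : f.wt ≤ e.wt := wt_le_of_hlt H hf he hfe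
      have hwtf : t.wt ≤ f.wt := wt_le_of_hlt H ht hf htf
      have hpe := wt_pos e; have hpf := wt_pos f; have hpt := wt_pos t
      simp only [wt_mul] at hn
      simp only [lvs_mul, Finset.union_subset_iff] at hls
      obtain ⟨hle2, hlf2⟩ := hls
      have hAf : Acnt H n Sf f < Acnt H n Sf t := Acnt_lt H ht hf (by omega) hlf2 htf
      have hAe : Acnt H n Sf e < Acnt H n Sf t := Acnt_lt H ht he (by omega) hle2 hte
      have key : ∀ p : FreeMagma A, p ∈ H.B → lvs p ⊆ Sf → hlt H t p →
          Acnt H n Sf p < Acnt H n Sf t → ∀ w' : ℕ, p.wt + w' = n → t.wt < w' →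
          ∀ y ∈ V2 S g H w' Sf t, S.br (evalMagma S g p) y ∈ V2 S g H n Sf t := by
        intro p hp hlp htp hAp w' hw' hw2 y hy
        have hpp := wt_pos p
        refine br_right S _ hy ?_
        rintro z (⟨b, hb, hbw, hbl, rfl⟩ | ⟨v, hv, hv1, hvw, hvl, htv, rfl⟩)
        · by_cases hbp : b = p
          · subst hbp
            rcases zmod2_cases (dgAux δ b) with h0 | h1
            · have hgb := hom b; rw [h0] at hgb
              rw [S.even_sq _ hgb]
              exact Submodule.zero_mem _
            · have hgb := hom b; rw [h1] at hgb
              exact Submodule.subset_span (Or.inr ⟨b, hb, hgb, by omega, hbl, htp, rfl⟩)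
          · have htb : hlt H t b := hlt_of_wt H ht hb (by omega)
            have hAb : Acnt H n Sf b < Acnt H n Sf t := Acnt_lt H ht hb (by omega) hbl htb
            rcases hlt_total H hb hp hbp with hbp2 | hpb2
            · have hr := (ihk (3 * Acnt H n Sf b) (by omega) Sf).1 p b hp hb hbp2 hlp hbl
                (by omega) le_rfl
              exact V2_mono S g H (fun c0 hc0 h0 => hlt_trans H ht hb hc0 htb h0) hr
            · have hr := (ihk (3 * Acnt H n Sf p) (by omega) Sf).1 b p hb hp hpb2 hbl hlp
                (by omega) le_rfl
              have hr2 := swap_mem S _ (hom b) (hom p) hr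
              exact V2_mono S g H (fun c0 hc0 h0 => hlt_trans H ht hp hc0 htp h0) hr2
        · by_cases hvp : v = p
          · subst hvp
            rw [cube_zero S hv1]
            exact Submodule.zero_mem _
          · rcases hlt_total H hv hp hvp with hvp2 | hpv2
            · have hAv : Acnt H n Sf v < Acnt H n Sf t := Acnt_lt H ht hv (by omega) hvl htv
              exact (ihk (3 * Acnt H n Sf v + 2) (by omega) Sf).2.1 p v t hp hv ht hv1 hvp2
                htv.1 hlp hvl (by omega) le_rfl
            · exact (ihk (3 * Acnt H n Sf p + 1) (by omega) Sf).2.2.1 p v t hp hv ht hv1 hpv2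
                htp.1 hlp hvl (by omega) le_rfl
      have I1 : S.br (evalMagma S g f) (evalMagma S g t) ∈ V2 S g H (f.wt + t.wt) Sf t :=
        (ihn (f.wt + t.wt) (by omega) (3 * Acnt H (f.wt + t.wt) Sf t) Sf).1 f t hf ht htf
          hlf2 hlt2 rfl le_rfl
      have I2 : S.br (evalMagma S g e) (evalMagma S g t) ∈ V2 S g H (e.wt + t.wt) Sf t :=
        (ihn (e.wt + t.wt) (by omega) (3 * Acnt H (e.wt + t.wt) Sf t) Sf).1 e t he ht hte
          hle2 hlt2 rfl le_rfl
      have I2' := swap_mem S _ (hom e) (hom t) I2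
      have T1 := key e he hle2 hte hAe (f.wt + t.wt) (by omega) (by omega) _ I1
      have T2 := key f hf hlf2 htf hAf (e.wt + t.wt) (by omega) (by omega) _ I2'
      have T3 := jac3 S _ (hom e) (hom f) (hom t) T1 T2
      have homEF := hom (FreeMagma.mul e f)
      rw [eval_mul] at homEF
      exact swap_mem S _ (hom t) homEF T3
  -- Component 2 : [x, [c,c]] with c < x
  have hP2a : ∀ x c d : FreeMagma A, x ∈ H.B → c ∈ H.B → d ∈ H.B →
      evalMagma S g c ∈ S.grade 1 → hlt H c x → H.le d c → lvs x ⊆ Sf → lvs c ⊆ Sf →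
      x.wt + 2 * c.wt = n → 3 * Acnt H n Sf c + 2 ≤ k →
      S.br (evalMagma S g x) (S.br (evalMagma S g c) (evalMagma S g c)) ∈ V2 S g H n Sf d := by
    intro x c d hx hc hd hc1 hcx hdc hlx hlc hn2 hk2
    have hpx := wt_pos x; have hpc := wt_pos c
    have M1 : S.br (evalMagma S g x) (evalMagma S g c) ∈ V2 S g H (x.wt + c.wt) Sf c :=
      (ihn (x.wt + c.wt) (by omega) (3 * Acnt H (x.wt + c.wt) Sf c) Sf).1 x c hx hc hcx hlx
        hlc rfl le_rfl
    have M1' := swap_mem S _ (hom x) (hom c) M1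
    have key : ∀ y ∈ V2 S g H (x.wt + c.wt) Sf c,
        S.br (evalMagma S g c) y ∈ V2 S g H n Sf d := by
      intro y hy
      refine br_right S _ hy ?_
      rintro z (⟨b, hb, hbw, hbl, rfl⟩ | ⟨v, hv, hv1, hvw, hvl, hcv, rfl⟩)
      · have hcb : hlt H c b := hlt_of_wt H hc hb (by omega)
        have hr := (ihk (3 * Acnt H n Sf c) (by omega) Sf).1 b c hb hc hcb hbl hlc
          (by omega) le_rfl
        have hr2 := swap_mem S _ (hom b) (hom c) hr
        exact V2_mono S g H (fun c0 hc0 h0 => hle_hlt_trans H hd hc hc0 hdc h0) hr2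
      · exact (ihk (3 * Acnt H n Sf c + 1) (by omega) Sf).2.2.1 c v d hc hv hd hv1 hcv hdc
          hlc hvl (by omega) le_rfl
    have h1 := key _ M1'
    have h2 := key _ M1
    exact jac3 S _ hc1 hc1 (hom x) h1 h2
  -- Component 3 : [x, [c,c]] with x < c
  have hP2b : ∀ x c d : FreeMagma A, x ∈ H.B → c ∈ H.B → d ∈ H.B →
      evalMagma S g c ∈ S.grade 1 → hlt H x c → H.le d x → lvs x ⊆ Sf → lvs c ⊆ Sf →
      x.wt + 2 * c.wt = n → 3 * Acnt H n Sf x + 1 ≤ k →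
      S.br (evalMagma S g x) (S.br (evalMagma S g c) (evalMagma S g c)) ∈ V2 S g H n Sf d := by
    intro x c d hx hc hd hc1 hxc hdx hlx hlc hn2 hk2
    have hpx := wt_pos x; have hpc := wt_pos c
    have hAc : Acnt H n Sf c < Acnt H n Sf x := Acnt_lt H hx hc (by omega) hlc hxc
    have hdc : H.le d c := H.le_trans d hd x hx c hc hdx hxc.1
    have M1 : S.br (evalMagma S g c) (evalMagma S g x) ∈ V2 S g H (c.wt + x.wt) Sf x :=
      (ihn (c.wt + x.wt) (by omega) (3 * Acnt H (c.wt + x.wt) Sf x) Sf).1 c x hc hx hxc hlc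
        hlx rfl le_rfl
    have M1' := swap_mem S _ (hom c) (hom x) M1
    have key : ∀ y ∈ V2 S g H (c.wt + x.wt) Sf x,
        S.br (evalMagma S g c) y ∈ V2 S g H n Sf d := by
      intro y hy
      refine br_right S _ hy ?_
      rintro z (⟨b, hb, hbw, hbl, rfl⟩ | ⟨v, hv, hv1, hvw, hvl, hxv, rfl⟩)
      · have hcb : hlt H c b := hlt_of_wt H hc hb (by omega)
        have hr := (ihk (3 * Acnt H n Sf c) (by omega) Sf).1 b c hb hc hcb hbl hlc
          (by omega) le_rfl
        have hr2 := swap_mem S _ (hom b) (hom c) hr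
        exact V2_mono S g H (fun c0 hc0 h0 => hle_hlt_trans H hd hc hc0 hdc h0) hr2
      · by_cases hvc : v = c
        · subst hvc
          rw [cube_zero S hv1]
          exact Submodule.zero_mem _
        · rcases hlt_total H hc hv (fun h => hvc h.symm) with hcv | hvc2
          · exact (ihk (3 * Acnt H n Sf c + 1) (by omega) Sf).2.2.1 c v d hc hv hd hv1 hcv
              hdc hlc hvl (by omega) le_rfl
          · have hdv : H.le d v := H.le_trans d hd x hx v hv hdx hxv.1
            have hAv : Acnt H n Sf v < Acnt H n Sf x := Acnt_lt H hx hv (by omega) hvl hxv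
            exact (ihk (3 * Acnt H n Sf v + 2) (by omega) Sf).2.1 c v d hc hv hd hv1 hvc2 hdv
              hlc hvl (by omega) le_rfl
    have h1 := key _ M1
    have h2 := key _ M1'
    exact jac3 S _ hc1 hc1 (hom x) h1 h2
  -- Component 4 : brackets of two squares
  have hP3 : ∀ c c' : FreeMagma A, c ∈ H.B → c' ∈ H.B → evalMagma S g c ∈ S.grade 1 →
      evalMagma S g c' ∈ S.grade 1 → lvs c ⊆ Sf → lvs c' ⊆ Sf → 2 * c.wt + 2 * c'.wt = n →
      3 * Acnt H n Sf c + 3 * Acnt H n Sf c' ≤ k →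
      S.br (S.br (evalMagma S g c) (evalMagma S g c))
        (S.br (evalMagma S g c') (evalMagma S g c')) ∈ VV S g H n Sf := by
    intro c c' hc hc' h1g h1g' hlc hlc' hn2 hk2
    by_cases hcc : c = c'
    · subst hcc
      rw [S.even_sq _ (sq_grade S h1g)]
      exact Submodule.zero_mem _
    · have main : ∀ a b : FreeMagma A, a ∈ H.B → b ∈ H.B → evalMagma S g a ∈ S.grade 1 →
          evalMagma S g b ∈ S.grade 1 → lvs a ⊆ Sf → lvs b ⊆ Sf → 2 * a.wt + 2 * b.wt = n →
          hlt H b a → 3 * Acnt H n Sf a + 3 * Acnt H n Sf b ≤ k →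
          S.br (S.br (evalMagma S g a) (evalMagma S g a))
            (S.br (evalMagma S g b) (evalMagma S g b)) ∈ VV S g H n Sf := by
        intro a b ha hb ha1 hb1 hla hlb hn3 hba hk3
        have hpa := wt_pos a; have hpb := wt_pos b
        have hAab : Acnt H n Sf a < Acnt H n Sf b := Acnt_lt H hb ha (by omega) hla hba
        have M2 : S.br (evalMagma S g a) (S.br (evalMagma S g b) (evalMagma S g b))
            ∈ V2 S g H (a.wt + 2 * b.wt) Sf b :=
          (ihn (a.wt + 2 * b.wt) (by omega) (3 * Acnt H (a.wt + 2 * b.wt) Sf b + 2) Sf).2.1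
            a b b ha hb hb hb1 hba (H.le_refl b hb) hla hlb rfl le_rfl
        have M2' := swap_mem S _ (hom a) (sq_grade S hb1) M2
        have key : ∀ y ∈ V2 S g H (a.wt + 2 * b.wt) Sf b,
            S.br (evalMagma S g a) y ∈ VV S g H n Sf := by
          intro y hy
          refine br_right S _ hy ?_
          rintro z (⟨b0, hb0, hbw, hbl0, rfl⟩ | ⟨v, hv, hv1, hvw, hvl, hbv, rfl⟩)
          · have hab0 : hlt H a b0 := hlt_of_wt H ha hb0 (by omega)
            have hr := (ihk (3 * Acnt H n Sf a) (by omega) Sf).1 b0 a hb0 ha hab0 hbl0 hla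
              (by omega) le_rfl
            exact V2_le_VV S g H n Sf a (swap_mem S _ (hom b0) (hom a) hr)
          · by_cases hva : v = a
            · subst hva
              rw [cube_zero S hv1]
              exact Submodule.zero_mem _
            · rcases hlt_total H ha hv (fun h => hva h.symm) with hav | hva2
              · exact V2_le_VV S g H n Sf a ((ihk (3 * Acnt H n Sf a + 1) (by omega) Sf).2.2.1
                  a v a ha hv ha hv1 hav (H.le_refl a ha) hla hvl (by omega) le_rfl)
              · have hAv : Acnt H n Sf v < Acnt H n Sf b := Acnt_lt H hb hv (by omega) hvl hbv
                exact V2_le_VV S g H n Sf v ((ihk (3 * Acnt H n Sf v + 2) (by omega) Sf).2.1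
                  a v v ha hv hv hv1 hva2 (H.le_refl v hv) hla hvl (by omega) le_rfl)
        have hh1 := key _ M2
        have hh2 := key _ M2'
        have T3 := jac3 S _ ha1 ha1 (sq_grade S hb1) hh1 hh2
        exact swap_mem S _ (sq_grade S hb1) (sq_grade S ha1) T3
      rcases hlt_total H hc hc' hcc with hcc' | hc'c
      · exact swap_mem S _ (sq_grade S h1g') (sq_grade S h1g)
          (main c' c hc' hc h1g' h1g hlc' hlc (by omega) hcc' (by omega))
      · exact main c c' hc hc' h1g h1g' hlc hlc' hn2 hc'c hk2
  -- Component 5 : evaluation of arbitrary trees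
  have hP0 : ∀ u : FreeMagma A, u.wt = n → lvs u ⊆ Sf → 6 * Tcnt n Sf + 3 ≤ k →
      evalMagma S g u ∈ VV S g H n Sf := by
    intro u hwu hlu hk2
    cases u with
    | of a =>
      exact Submodule.subset_span (Or.inl ⟨FreeMagma.of a, H.of_mem a, hwu, hlu, rfl⟩)
    | mul s t =>
      have hps := wt_pos s; have hpt := wt_pos t
      simp only [wt_mul] at hwu
      simp only [lvs_mul, Finset.union_subset_iff] at hlu
      obtain ⟨hls2, hlt2⟩ := hlu
      have hsV : evalMagma S g s ∈ VV S g H s.wt Sf :=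
        (ihn s.wt (by omega) (6 * Tcnt s.wt Sf + 3) Sf).2.2.2.2 s rfl hls2 le_rfl
      have htV : evalMagma S g t ∈ VV S g H t.wt Sf :=
        (ihn t.wt (by omega) (6 * Tcnt t.wt Sf + 3) Sf).2.2.2.2 t rfl hlt2 le_rfl
      rw [eval_mul]
      have core : ∀ b b' : FreeMagma A, b ∈ H.B → b' ∈ H.B → lvs b ⊆ Sf → lvs b' ⊆ Sf →
          b.wt + b'.wt = n → S.br (evalMagma S g b) (evalMagma S g b') ∈ VV S g H n Sf := by
        intro b b' hb hb' hlb hlb' hn3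
        by_cases hbb : b = b'
        · subst hbb
          rcases zmod2_cases (dgAux δ b) with h0 | h1
          · have hgb := hom b; rw [h0] at hgb
            rw [S.even_sq _ hgb]
            exact Submodule.zero_mem _
          · have hgb := hom b; rw [h1] at hgb
            exact Submodule.subset_span (Or.inr ⟨b, hb, hgb, by omega, hlb, rfl⟩)
        · have hA1 := Acnt_le_Tcnt H n Sf b
          have hA2 := Acnt_le_Tcnt H n Sf b'
          rcases hlt_total H hb hb' hbb with hbb' | hb'b
          · have hr := (ihk (3 * Acnt H n Sf b) (by omega) Sf).1 b' b hb' hb hbb' hlb' hlb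
              (by omega) le_rfl
            exact V2_le_VV S g H n Sf b (swap_mem S _ (hom b') (hom b) hr)
          · have hr := (ihk (3 * Acnt H n Sf b') (by omega) Sf).1 b b' hb hb' hb'b hlb hlb'
              hn3 le_rfl
            exact V2_le_VV S g H n Sf b' hr
      have coreQ : ∀ b c0 : FreeMagma A, b ∈ H.B → c0 ∈ H.B →
          evalMagma S g c0 ∈ S.grade 1 → lvs b ⊆ Sf → lvs c0 ⊆ Sf → b.wt + 2 * c0.wt = n →
          S.br (evalMagma S g b) (S.br (evalMagma S g c0) (evalMagma S g c0))
            ∈ VV S g H n Sf := by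
        intro b c0 hb hc0 hc01 hlb hlc0 hn3
        by_cases hbc : b = c0
        · subst hbc
          rw [cube_zero S hc01]
          exact Submodule.zero_mem _
        · have hA1 := Acnt_le_Tcnt H n Sf b
          have hA2 := Acnt_le_Tcnt H n Sf c0
          rcases hlt_total H hb hc0 hbc with hbc2 | hcb2
          · exact V2_le_VV S g H n Sf b ((ihk (3 * Acnt H n Sf b + 1) (by omega) Sf).2.2.1
              b c0 b hb hc0 hb hc01 hbc2 (H.le_refl b hb) hlb hlc0 hn3 le_rfl)
          · exact V2_le_VV S g H n Sf c0 ((ihk (3 * Acnt H n Sf c0 + 2) (by omega) Sf).2.1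
              b c0 c0 hb hc0 hc0 hc01 hcb2 (H.le_refl c0 hc0) hlb hlc0 hn3 le_rfl)
      refine br_left S _ hsV ?_
      intro z1 hz1
      refine br_right S _ htV ?_
      intro z2 hz2
      rcases hz1 with ⟨b, hb, hbw, hbl, rfl⟩ | ⟨c0, hc0, hc01, hc0w, hc0l, rfl⟩
      · rcases hz2 with ⟨b', hb', hbw', hbl', rfl⟩ | ⟨c1, hc1', hc11, hc1w, hc1l, rfl⟩
        · exact core b b' hb hb' hbl hbl' (by omega)
        · exact coreQ b c1 hb hc1' hc11 hbl hc1l (by omega)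
      · rcases hz2 with ⟨b', hb', hbw', hbl', rfl⟩ | ⟨c1, hc1', hc11, hc1w, hc1l, rfl⟩
        · exact swap_mem S _ (hom b') (sq_grade S hc01)
            (coreQ b' c0 hb' hc0 hc01 hbl' hc0l (by omega))
        · have hA1 := Acnt_le_Tcnt H n Sf c0
          have hA2 := Acnt_le_Tcnt H n Sf c1
          exact (ihk (3 * Acnt H n Sf c0 + 3 * Acnt H n Sf c1) (by omega) Sf).2.2.2.1 c0 c1
            hc0 hc1' hc01 hc11 hc0l hc1l (by omega) le_rfl
  exact ⟨hP1, hP2a, hP2b, hP3, hP0⟩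

end Super

end BCSpan

/-- If a Lie superalgebra `L` is generated by homogeneous elements `g a` (`a ∈ A`),
and `C` is a complete set of basic commutators on `A`, then
`C ∪ {[c,c] : c ∈ C odd}` spans `L` as an `R`-module. -/
theorem basic_commutators_span {R L A : Type*} [CommRing R] [AddCommGroup L] [Module R L]
    [LinearOrder A] (S : LieSuperalgebra R L) (g : A → L)
    (hhom : ∀ a, ∃ d, g a ∈ S.grade d)
    (hgen : ∀ P : Submodule R L, (∀ a, g a ∈ P) →
      (∀ x ∈ P, ∀ y ∈ P, S.br x y ∈ P) → ∀ x : L, x ∈ P)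
    (H : HallData A) :
    Submodule.span R
      ((evalMagma S g '' H.B) ∪
        {x : L | ∃ t ∈ H.B, evalMagma S g t ∈ S.grade 1 ∧
          x = S.br (evalMagma S g t) (evalMagma S g t)}) = ⊤ := by
  classical
  set T : Set L := (evalMagma S g '' H.B) ∪
    {x : L | ∃ t ∈ H.B, evalMagma S g t ∈ S.grade 1 ∧
      x = S.br (evalMagma S g t) (evalMagma S g t)} with hT
  rw [eq_top_iff]
  intro x _
  refine hgen _ ?_ ?_ x
  · intro a
    exact Submodule.subset_span (Or.inl ⟨FreeMagma.of a, H.of_mem a, rfl⟩)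
  · intro y hy z hz
    have hδ : ∀ a, g a ∈ S.grade ((fun a => (hhom a).choose) a) := fun a => (hhom a).choose_spec
    have hVP : ∀ (m : ℕ) (Sf : Finset A),
        BCSpan.VV S g H m Sf ≤ Submodule.span R T := by
      intro m Sf
      apply Submodule.span_le.mpr
      rintro w (⟨b, hb, -, -, rfl⟩ | ⟨c, hc, hc1, -, -, rfl⟩)
      · exact Submodule.subset_span (Or.inl ⟨b, hb, rfl⟩)
      · exact Submodule.subset_span (Or.inr ⟨c, hc, hc1, rfl⟩)
    have core : ∀ u1 u2 : FreeMagma A,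
        S.br (evalMagma S g u1) (evalMagma S g u2) ∈ Submodule.span R T := by
      intro u1 u2
      have hm := (BCSpan.master S g H (fun a => (hhom a).choose) hδ
          ((FreeMagma.mul u1 u2).wt)
          (6 * BCSpan.Tcnt ((FreeMagma.mul u1 u2).wt) (BCSpan.lvs (FreeMagma.mul u1 u2)) + 3)
          (BCSpan.lvs (FreeMagma.mul u1 u2))).2.2.2.2 (FreeMagma.mul u1 u2) rfl
          subset_rfl le_rfl
      rw [BCSpan.eval_mul] at hm
      exact hVP _ _ hm
    refine BCSpan.br_left S _ hy ?_
    intro z1 hz1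
    refine BCSpan.br_right S _ hz ?_
    intro z2 hz2
    have hz1' : ∃ u, z1 = evalMagma S g u := by
      rcases hz1 with ⟨b, hb, rfl⟩ | ⟨c, hc, -, rfl⟩
      · exact ⟨b, rfl⟩
      · exact ⟨FreeMagma.mul c c, rfl⟩
    have hz2' : ∃ u, z2 = evalMagma S g u := by
      rcases hz2 with ⟨b, hb, rfl⟩ | ⟨c, hc, -, rfl⟩
      · exact ⟨b, rfl⟩
      · exact ⟨FreeMagma.mul c c, rfl⟩
    obtain ⟨u1, rfl⟩ := hz1'
    obtain ⟨u2, rfl⟩ := hz2'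
    exact core u1 u2
end

section
/- Let A be the free associative superalgebra over Z on homogeneous generators a_1 < ... < a_r, with bracket [a,b] = ab - (-1)^{|a||b|} ba, and let C be a complete set of basic commutators on a_1, ..., a_r. Then for each n ≥ 1, there are exactly r^n basic products of weight n, and they span the homogeneous component A_n of word length n. -/
/-- The `ℤ/2`-degree of a formal bracketing, given degrees of the generators. -/
def degm {A : Type*} (deg : A → ZMod 2) : FreeMagma A → ZMod 2
  | .of a => deg a
  | .mul s t => degm deg s + degm deg t

/-- Evaluation of a formal bracketing in the free associative superalgebra over `ℤ`
via the superbracket `[a,b] = ab - (-1)^{|a||b|} ba`. -/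
def evalA {A : Type*} (deg : A → ZMod 2) : FreeMagma A → FreeAlgebra ℤ A
  | .of a => FreeAlgebra.ι ℤ a
  | .mul s t => evalA deg s * evalA deg t -
      ((-1 : ℤ) ^ ((degm deg s).val * (degm deg t).val)) • (evalA deg t * evalA deg s)

/-- `IsBasicProduct H n l` : `l` is a nonempty nondecreasing list of basic commutators
of total weight `n`; the corresponding basic product is the product of their values. -/
def IsBasicProduct {A : Type*} [LinearOrder A] (H : HallData A) (n : ℕ)
    (l : List (FreeMagma A)) : Prop :=
  l ≠ [] ∧ (∀ t ∈ l, t ∈ H.B) ∧ l.Chain' H.le ∧ (l.map FreeMagma.wt).sum = n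

/-- The component of word length `n` in the free associative algebra over `ℤ` on `r`
generators. -/
def freeAlgDeg (r n : ℕ) : Submodule ℤ (FreeAlgebra ℤ (Fin r)) :=
  Submodule.span ℤ
    {x | ∃ w : Fin n → Fin r, x = (List.ofFn fun i => FreeAlgebra.ι ℤ (w i)).prod}


set_option linter.unusedSectionVars false

namespace HallAux

variable {A : Type*}

/-- foliage of a tree -/
def fol : FreeMagma A → List A
  | .of a => [a]
  | .mul s t => fol s ++ fol t

/-- first letter -/
def hdl : FreeMagma A → A
  | .of a => a
  | .mul s _ => hdl s

/-- the list of right children along the left spine, innermost first -/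
def spine : FreeMagma A → List (FreeMagma A)
  | .of _ => []
  | .mul s t => spine s ++ [t]

@[simp] lemma fol_ne_nil (t : FreeMagma A) : fol t ≠ [] := by
  induction t using FreeMagma.recOn with
  | of a => simp [fol]
  | mul s t ihs iht =>
    simp only [fol, ne_eq, List.append_eq_nil_iff, not_and]
    intro h; exact absurd h ihs

lemma fol_length (t : FreeMagma A) : (fol t).length = t.wt := by
  induction t using FreeMagma.recOn with
  | of a => rfl
  | mul s t ihs iht => simp [fol, FreeMagma.wt, ihs, iht]

lemma wt_pos (t : FreeMagma A) : 1 ≤ t.wt := by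
  induction t using FreeMagma.recOn with
  | of a => simp [FreeMagma.wt]
  | mul s t ihs iht => simp [FreeMagma.wt]; omega

lemma fol_eq (t : FreeMagma A) : fol t = hdl t :: ((spine t).map fol).flatten := by
  induction t using FreeMagma.recOn with
  | of a => simp [fol, hdl, spine]
  | mul s t ihs iht =>
    simp only [fol, hdl, spine, List.map_append, List.flatten_append, ihs]
    simp

variable [LinearOrder A] (H : HallData A)

lemma spine_mem {c : FreeMagma A} (hc : c ∈ H.B) : ∀ t ∈ spine c, t ∈ H.B := by
  induction c using FreeMagma.recOn with
  | of a => simp [spine]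
  | mul s t ihs iht =>
    rcases (H.mul_mem s t).1 hc with ⟨hs, ht, _, _⟩
    intro u hu
    simp only [spine, List.mem_append, List.mem_singleton] at hu
    rcases hu with h | rfl
    · exact ihs hs u h
    · exact ht

lemma spine_getLast? {c : FreeMagma A} {x : FreeMagma A}
    (h : (spine c).getLast? = some x) : ∃ e, c = FreeMagma.mul e x := by
  cases c with
  | of a => simp [spine] at h
  | mul s t =>
    simp only [spine] at h
    rw [List.getLast?_append_of_ne_nil] at h
    · simp at h; exact ⟨s, by rw [h]⟩
    · simp

lemma chain'_spine {c : FreeMagma A} (hc : c ∈ H.B) : (spine c).Chain' H.le := by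
  induction c using FreeMagma.recOn with
  | of a => simp [spine, List.Chain']
  | mul s t ihs iht =>
    rcases (H.mul_mem s t).1 hc with ⟨hs, ht, _, h4⟩
    simp only [spine]
    refine List.isChain_append.2 ⟨ihs hs, List.isChain_singleton t, ?_⟩
    intro x hx y hy
    simp only [List.head?_cons, Option.mem_def, Option.some.injEq] at hy
    subst hy
    rcases spine_getLast? hx with ⟨e, rfl⟩
    exact h4 e x rfl

end HallAux

namespace HallAux

variable {A : Type*} [LinearOrder A] (H : HallData A)

/-- strict order -/
def slt (s t : FreeMagma A) : Prop := H.le s t ∧ s ≠ t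

lemma lt_of_wt_lt {s t : FreeMagma A} (hs : s ∈ H.B) (ht : t ∈ H.B)
    (h : s.wt < t.wt) : H.le s t :=
  (H.wt_mono s hs t ht h).1

lemma le_child {e f : FreeMagma A} (h : FreeMagma.mul e f ∈ H.B) :
    H.le f (FreeMagma.mul e f) := by
  rcases (H.mul_mem e f).1 h with ⟨he, hf, _, _⟩
  refine lt_of_wt_lt H hf h ?_
  have := wt_pos (A := A) e
  simp [FreeMagma.wt]; omega

open Classical in
/-- the greedy merging process -/
noncomputable def greedy : FreeMagma A → List (FreeMagma A) → FreeMagma A × List (FreeMagma A)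
  | c, [] => (c, [])
  | c, g :: T => if FreeMagma.mul c g ∈ H.B then greedy (FreeMagma.mul c g) T else (c, g :: T)

@[simp] lemma greedy_nil (c : FreeMagma A) : greedy H c [] = (c, []) := by
  simp [greedy]

lemma greedy_cons_pos {c g : FreeMagma A} (T : List (FreeMagma A))
    (h : FreeMagma.mul c g ∈ H.B) :
    greedy H c (g :: T) = greedy H (FreeMagma.mul c g) T := by
  rw [greedy, if_pos h]

lemma greedy_cons_neg {c g : FreeMagma A} (T : List (FreeMagma A))
    (h : FreeMagma.mul c g ∉ H.B) :
    greedy H c (g :: T) = (c, g :: T) := by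
  rw [greedy, if_neg h]

/-- if the head of T is ≥ c then greedy stops -/
lemma greedy_stop {c : FreeMagma A} (hc : c ∈ H.B) (T : List (FreeMagma A))
    (hT : ∀ g, T.head? = some g → H.le c g) : greedy H c T = (c, T) := by
  cases T with
  | nil => simp
  | cons g T' =>
    refine greedy_cons_neg H T' ?_
    intro hmem
    rcases (H.mul_mem c g).1 hmem with ⟨_, hg, ⟨hle, hne⟩, _⟩
    exact hne (H.le_antisymm g hg c hc hle (hT g rfl))

/-- greedy swallows the spine -/
lemma greedy_spine {c : FreeMagma A} (hc : c ∈ H.B) (T : List (FreeMagma A)) :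
    greedy H (FreeMagma.of (hdl c)) (spine c ++ T) = greedy H c T := by
  induction c using FreeMagma.recOn generalizing T with
  | of a => simp [hdl, spine]
  | mul e f ihe ihf =>
    have he : e ∈ H.B := ((H.mul_mem e f).1 hc).1
    simp only [hdl, spine, List.append_assoc, List.cons_append, List.nil_append]
    rw [ihe he, greedy_cons_pos H T hc]

lemma greedy_spec : ∀ (L : List (FreeMagma A)) (c : FreeMagma A), c ∈ H.B →
    (∀ t ∈ L, t ∈ H.B) → L.Chain' H.le →
    (∀ e f, c = FreeMagma.mul e f → ∀ g, L.head? = some g → H.le f g) →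
    (greedy H c L).1 ∈ H.B ∧ (∀ t ∈ (greedy H c L).2, t ∈ H.B) ∧
      List.Chain' H.le ((greedy H c L).1 :: (greedy H c L).2) ∧
      fol (greedy H c L).1 ++ (((greedy H c L).2).map fol).flatten
        = fol c ++ (L.map fol).flatten := by
  intro L
  induction L with
  | nil =>
    intro c hc _ _ _
    simp [hc, List.Chain']
  | cons g T ih =>
    intro c hc hmem hch hcond
    have hg : g ∈ H.B := hmem g (by simp)
    by_cases hm : FreeMagma.mul c g ∈ H.B
    · rw [greedy_cons_pos H T hm]
      have := ih (FreeMagma.mul c g) hm (fun t ht => hmem t (by simp [ht]))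
        hch.tail ?_
      · rcases this with ⟨h1, h2, h3, h4⟩
        refine ⟨h1, h2, h3, ?_⟩
        rw [h4]
        simp [fol]
      · intro e f hef g' hg'
        injection hef with h1 h2; replace hef := And.intro h1 h2
        rcases hef with ⟨rfl, rfl⟩
        exact (List.isChain_cons.1 hch).1 g' hg'
    · rw [greedy_cons_neg H T hm]
      have hle : H.le c g := by
        rcases H.le_total c hc g hg with h | h
        · exact h
        · by_cases heq : g = c
          · subst heq; exact H.le_refl g hg
          · exact absurd ((H.mul_mem c g).2
              ⟨hc, hg, ⟨h, heq⟩, fun e f hef => hcond e f hef g rfl⟩) hm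
      exact ⟨hc, hmem, List.isChain_cons.2 ⟨fun y hy => by simp_all, hch⟩, rfl⟩

/-- factorization predicate -/
def Fact (L : List (FreeMagma A)) (w : List A) : Prop :=
  (∀ t ∈ L, t ∈ H.B) ∧ L.Chain' H.le ∧ (L.map fol).flatten = w

theorem existsUnique_fact : ∀ w : List A, ∃! L, Fact H L w := by
  intro w
  induction w with
  | nil =>
    refine ⟨[], ⟨by simp, by simp [List.Chain'], by simp⟩, ?_⟩
    rintro L ⟨_, _, hL⟩
    cases L with
    | nil => rfl
    | cons c T => simp [fol_ne_nil] at hL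
  | cons x w' ih =>
    rcases ih with ⟨G, ⟨hGmem, hGch, hGfl⟩, hGuniq⟩
    set c' := (greedy H (FreeMagma.of x) G).1 with hc'
    set T := (greedy H (FreeMagma.of x) G).2 with hT
    have hspec := greedy_spec H G (FreeMagma.of x) (H.of_mem x) hGmem hGch
      (fun e f hef => by cases hef)
    rcases hspec with ⟨h1, h2, h3, h4⟩
    have hfact : Fact H (c' :: T) (x :: w') := by
      refine ⟨?_, h3, ?_⟩
      · intro t ht
        rcases List.mem_cons.1 ht with rfl | ht
        · exact h1
        · exact h2 t ht
      · simp only [List.map_cons, List.flatten_cons]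
        rw [h4, hGfl]
        simp [fol]
    refine ⟨c' :: T, hfact, ?_⟩
    rintro M ⟨hMmem, hMch, hMfl⟩
    cases M with
    | nil => simp at hMfl
    | cons c T'' =>
      have hcB : c ∈ H.B := hMmem c (by simp)
      simp only [List.map_cons, List.flatten_cons] at hMfl
      rw [fol_eq c] at hMfl
      simp only [List.cons_append, List.cons.injEq] at hMfl
      rcases hMfl with ⟨hx, hrest⟩
      -- G' = spine c ++ T'' is a factorization of w'
      have hfactG' : Fact H (spine c ++ T'') w' := by
        refine ⟨?_, ?_, ?_⟩
        · intro t ht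
          rcases List.mem_append.1 ht with ht | ht
          · exact spine_mem H hcB t ht
          · exact hMmem t (by simp [ht])
        · refine List.isChain_append.2 ⟨chain'_spine H hcB, hMch.tail, ?_⟩
          intro y hy z hz
          rcases spine_getLast? hy with ⟨e, rfl⟩
          have hyB : y ∈ H.B := ((H.mul_mem e y).1 hcB).2.1
          have hzB : z ∈ H.B := hMmem z (by
            rcases T'' with _ | ⟨z', T'''⟩
            · simp at hz
            · simp at hz; simp [hz])
          refine H.le_trans y hyB _ hcB z hzB (le_child H hcB) ?_
          exact (List.isChain_cons.1 hMch).1 z hz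
        · rw [List.map_append, List.flatten_append, ← hrest]
      have hG'G : spine c ++ T'' = G := hGuniq _ hfactG'
      have : greedy H (FreeMagma.of x) G = (c, T'') := by
        rw [← hG'G, ← hx, greedy_spine H hcB, greedy_stop H hcB]
        intro g hg
        exact (List.isChain_cons.1 hMch).1 g hg
      rw [hc', hT, this]

end HallAux

namespace HallAux

lemma sum_wt_eq {A : Type*} (l : List (FreeMagma A)) :
    (l.map FreeMagma.wt).sum = ((l.map fol).flatten).length := by
  rw [List.length_flatten, List.map_map]
  congr 1
  exact List.map_congr_left (fun t _ => (fol_length t).symm)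

lemma card_basicProducts (r n : ℕ) (hn : 1 ≤ n) (H : HallData (Fin r)) :
    Nat.card {l : List (FreeMagma (Fin r)) // IsBasicProduct H n l} = r ^ n := by
  have e1 : {l : List (FreeMagma (Fin r)) // IsBasicProduct H n l} ≃
      {w : List (Fin r) // w.length = n} := by
    refine
      { toFun := fun lp => ⟨((lp.1.map fol).flatten), ?_⟩
        invFun := fun wp => ⟨(existsUnique_fact H wp.1).choose, ?_⟩
        left_inv := ?_
        right_inv := ?_ }
    · rw [← sum_wt_eq]; exact lp.2.2.2.2
    · obtain ⟨h1, h2, h3⟩ := (existsUnique_fact H wp.1).choose_spec.1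
      refine ⟨?_, h1, h2, by rw [sum_wt_eq, h3, wp.2]⟩
      intro hnil
      rw [hnil] at h3
      simp only [List.map_nil, List.flatten_nil] at h3
      have := wp.2
      rw [← h3] at this
      simp at this
      omega
    · rintro ⟨l, hl⟩
      have hfact : Fact H l ((l.map fol).flatten) := ⟨hl.2.1, hl.2.2.1, rfl⟩
      exact Subtype.ext ((existsUnique_fact H _).choose_spec.2 l hfact).symm
    · rintro ⟨w, hw⟩
      exact Subtype.ext (existsUnique_fact H w).choose_spec.1.2.2
  have e2 : {w : List (Fin r) // w.length = n} ≃ (Fin n → Fin r) :=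
    Equiv.vectorEquivFin (Fin r) n
  rw [Nat.card_congr (e1.trans e2), Nat.card_fun]
  simp

end HallAux

namespace HallAux

section Alg

lemma one_mem_D (r : ℕ) : (1 : FreeAlgebra ℤ (Fin r)) ∈ freeAlgDeg r 0 :=
  Submodule.subset_span ⟨Fin.elim0, by simp⟩

lemma D_mul {r a b : ℕ} {x y : FreeAlgebra ℤ (Fin r)} (hx : x ∈ freeAlgDeg r a)
    (hy : y ∈ freeAlgDeg r b) : x * y ∈ freeAlgDeg r (a + b) := by
  induction hx using Submodule.span_induction with
  | mem x hxmem =>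
    induction hy using Submodule.span_induction with
    | mem y hymem =>
      rcases hxmem with ⟨w₁, rfl⟩
      rcases hymem with ⟨w₂, rfl⟩
      refine Submodule.subset_span ⟨Fin.append w₁ w₂, ?_⟩
      rw [List.ofFn_add, List.prod_append]
      simp [Fin.append_left, Fin.append_right]
    | zero => simp
    | add u v hu hv ihu ihv => rw [mul_add]; exact add_mem ihu ihv
    | smul c u hu ih => rw [mul_smul_comm]; exact Submodule.smul_mem _ c ih
  | zero => simp
  | add u v hu hv ihu ihv => rw [add_mul]; exact add_mem ihu ihv
  | smul c u hu ih => rw [smul_mul_assoc]; exact Submodule.smul_mem _ c ih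

lemma evalA_mem_D {r : ℕ} (deg : Fin r → ZMod 2) (t : FreeMagma (Fin r)) :
    evalA deg t ∈ freeAlgDeg r t.wt := by
  induction t using FreeMagma.recOn with
  | of a =>
    refine Submodule.subset_span ⟨fun _ => a, ?_⟩
    simp [evalA, List.ofFn_succ, FreeMagma.wt]
  | mul s t ihs iht =>
    show evalA deg (FreeMagma.mul s t) ∈ freeAlgDeg r (FreeMagma.mul s t).wt
    rw [evalA]
    have h1 : evalA deg s * evalA deg t ∈ freeAlgDeg r (FreeMagma.mul s t).wt :=
      D_mul ihs iht
    have h2 : evalA deg t * evalA deg s ∈ freeAlgDeg r (FreeMagma.mul s t).wt := by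
      have := D_mul iht ihs
      rwa [show t.wt + s.wt = (FreeMagma.mul s t).wt by simp [FreeMagma.wt]; omega] at this
    exact sub_mem h1 (Submodule.smul_mem _ _ h2)

lemma prod_mem_D {r : ℕ} (deg : Fin r → ZMod 2) :
    ∀ l : List (FreeMagma (Fin r)),
      (l.map (evalA deg)).prod ∈ freeAlgDeg r ((l.map FreeMagma.wt).sum) := by
  intro l
  induction l with
  | nil => simpa using one_mem_D r
  | cons c l ih =>
    simp only [List.map_cons, List.prod_cons, List.sum_cons]
    exact D_mul (evalA_mem_D deg c) ih

lemma mul_left_mem_span {A : Type*} (a : FreeAlgebra ℤ A)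
    (s S : Set (FreeAlgebra ℤ A))
    (h : ∀ y ∈ s, a * y ∈ Submodule.span ℤ S) :
    ∀ x ∈ Submodule.span ℤ s, a * x ∈ Submodule.span ℤ S := by
  intro x hx
  induction hx using Submodule.span_induction with
  | mem y hy => exact h y hy
  | zero => simp
  | add u v hu hv ihu ihv => rw [mul_add]; exact add_mem ihu ihv
  | smul c u hu ih => rw [mul_smul_comm]; exact Submodule.smul_mem _ c ih

end Alg

section Claim2

variable {A : Type*} [LinearOrder A] (H : HallData A)

lemma le_mul_left {e f : FreeMagma A} (h : FreeMagma.mul e f ∈ H.B) :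
    H.le e (FreeMagma.mul e f) := by
  rcases (H.mul_mem e f).1 h with ⟨he, hf, _, _⟩
  refine lt_of_wt_lt H he h ?_
  have := wt_pos (A := A) f
  simp [FreeMagma.wt]; omega

lemma le_of_not_mul_mem {c g : FreeMagma A} (hc : c ∈ H.B) (hg : g ∈ H.B)
    (h4 : ∀ e f, c = FreeMagma.mul e f → H.le f g)
    (hm : FreeMagma.mul c g ∉ H.B) : H.le c g := by
  rcases H.le_total c hc g hg with h | h
  · exact h
  · by_cases heq : g = c
    · subst heq; exact H.le_refl g hg
    · exact absurd ((H.mul_mem c g).2 ⟨hc, hg, ⟨h, heq⟩, h4⟩) hm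

/-- the target span sets for the straightening lemma -/
def BPset (deg : A → ZMod 2) (m : ℕ) (P : FreeMagma A → Prop) :
    Set (FreeAlgebra ℤ A) :=
  {x | ∃ l, IsBasicProduct H m l ∧ (∀ h, l.head? = some h → P h) ∧
    x = (l.map (evalA deg)).prod}

lemma claim2 (deg : A → ZMod 2) :
    ∀ (R : List (FreeMagma A)) (c : FreeMagma A), c ∈ H.B →
    (∀ t ∈ R, t ∈ H.B) → R.Chain' H.le →
    (∀ e f, c = FreeMagma.mul e f → ∀ g, R.head? = some g → H.le f g) →
    evalA deg c * (R.map (evalA deg)).prod ∈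
      Submodule.span ℤ (BPset H deg (c.wt + (R.map FreeMagma.wt).sum)
        (fun h => H.le c h ∨ ∃ g, R.head? = some g ∧ H.le g h)) := by
  intro R
  induction R with
  | nil =>
    intro c hc _ _ _
    refine Submodule.subset_span ⟨[c], ⟨by simp, by simpa using hc, by simp [List.Chain'], by simp⟩,
      ?_, by simp⟩
    intro h hh
    simp only [List.head?_cons, Option.some.injEq] at hh
    subst hh
    exact Or.inl (H.le_refl c hc)
  | cons g R' ih =>
    intro c hc hmem hch hcond
    have hg : g ∈ H.B := hmem g (by simp)
    have hgR' : ∀ y, R'.head? = some y → H.le g y :=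
      fun y hy => (List.isChain_cons.1 hch).1 y hy
    have hmemR' : ∀ t ∈ R', t ∈ H.B := fun t ht => hmem t (by simp [ht])
    by_cases hm : FreeMagma.mul c g ∈ H.B
    · have key : evalA deg c * ((List.map (evalA deg) (g :: R')).prod)
          = evalA deg (FreeMagma.mul c g) * (R'.map (evalA deg)).prod
            + ((-1 : ℤ) ^ ((degm deg c).val * (degm deg g).val)) •
              (evalA deg g * (evalA deg c * (R'.map (evalA deg)).prod)) := by
        simp only [List.map_cons, List.prod_cons]
        rw [show evalA deg (FreeMagma.mul c g) = evalA deg c * evalA deg g -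
          ((-1 : ℤ) ^ ((degm deg c).val * (degm deg g).val)) •
            (evalA deg g * evalA deg c) from rfl]
        simp only [zsmul_eq_mul]
        noncomm_ring
      rw [key]
      refine Submodule.add_mem _ ?_ (Submodule.smul_mem _ _ ?_)
      · have h2 := ih (FreeMagma.mul c g) hm hmemR' hch.tail ?_
        · rw [show (FreeMagma.mul c g).wt + (R'.map FreeMagma.wt).sum
            = c.wt + ((g :: R').map FreeMagma.wt).sum by
              simp [FreeMagma.wt]; omega] at h2
          refine Submodule.span_mono ?_ h2
          rintro x ⟨l, hl, hhead, rfl⟩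
          refine ⟨l, hl, ?_, rfl⟩
          intro h hh
          have hhB : h ∈ H.B := hl.2.1 h (List.mem_of_mem_head? hh)
          rcases hhead h hh with hcase | ⟨y, hy, hley⟩
          · exact Or.inl (H.le_trans c hc _ hm h hhB (le_mul_left H hm) hcase)
          · have hyB : y ∈ H.B := hmemR' y (List.mem_of_mem_head? hy)
            exact Or.inr ⟨g, rfl, H.le_trans g hg y hyB h hhB (hgR' y hy) hley⟩
        · intro e f hef y hy
          injection hef with h1 h2; replace hef := And.intro h1 h2
          rcases hef with ⟨rfl, rfl⟩
          exact hgR' y hy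
      · have h1 := ih c hc hmemR' hch.tail ?_
        · refine mul_left_mem_span _ _ _ ?_ _ h1
          rintro y ⟨l, hl, hhead, rfl⟩
          have hlne : l ≠ [] := hl.1
          obtain ⟨h₀, l', rfl⟩ := List.exists_cons_of_ne_nil hlne
          have hh₀B : h₀ ∈ H.B := hl.2.1 h₀ (by simp)
          have hgh₀ : H.le g h₀ := by
            rcases hhead h₀ rfl with hcase | ⟨y, hy, hley⟩
            · have hgc : H.le g c := ((H.mul_mem c g).1 hm).2.2.1.1
              exact H.le_trans g hg c hc h₀ hh₀B hgc hcase
            · have hyB : y ∈ H.B := hmemR' y (List.mem_of_mem_head? hy)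
              exact H.le_trans g hg y hyB h₀ hh₀B (hgR' y hy) hley
          refine Submodule.subset_span ⟨g :: h₀ :: l', ⟨by simp, ?_, ?_, ?_⟩, ?_, by simp⟩
          · intro t ht
            rcases List.mem_cons.1 ht with rfl | ht
            · exact hg
            · exact hl.2.1 t ht
          · exact List.isChain_cons.2 ⟨fun y hy => by simp at hy; subst hy; exact hgh₀,
              hl.2.2.1⟩
          · have := hl.2.2.2
            simp only [List.map_cons, List.sum_cons] at this ⊢
            omega
          · intro h hh
            simp only [List.head?_cons, Option.some.injEq] at hh
            subst hh
            exact Or.inr ⟨g, rfl, H.le_refl g hg⟩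
        · intro e f hef y hy
          have hfg : H.le f g := hcond e f hef g rfl
          have hfB : f ∈ H.B := by
            subst hef
            exact ((H.mul_mem e f).1 hc).2.1
          have hyB : y ∈ H.B := hmemR' y (List.mem_of_mem_head? hy)
          exact H.le_trans f hfB g hg y hyB hfg (hgR' y hy)
    · have hle : H.le c g := le_of_not_mul_mem H hc hg (fun e f hef => hcond e f hef g rfl) hm
      refine Submodule.subset_span ⟨c :: g :: R', ⟨by simp, ?_, ?_, by simp⟩, ?_, by simp⟩
      · intro t ht
        rcases List.mem_cons.1 ht with rfl | ht
        · exact hc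
        · exact hmem t ht
      · exact List.isChain_cons_cons.2 ⟨hle, hch⟩
      · intro h hh
        simp only [List.head?_cons, Option.some.injEq] at hh
        subst hh
        exact Or.inl (H.le_refl c hc)

end Claim2

lemma span_eq (r n : ℕ) (hn : 1 ≤ n) (deg : Fin r → ZMod 2) (H : HallData (Fin r)) :
    Submodule.span ℤ
        {x : FreeAlgebra ℤ (Fin r) | ∃ l, IsBasicProduct H n l ∧ x = (l.map (evalA deg)).prod}
      = freeAlgDeg r n := by
  apply le_antisymm
  · rw [Submodule.span_le]
    rintro x ⟨l, hl, rfl⟩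
    have := prod_mem_D deg l
    rwa [hl.2.2.2] at this
  · have main : ∀ wl : List (Fin r), wl ≠ [] →
        ((wl.map (fun a => FreeAlgebra.ι ℤ a)).prod) ∈ Submodule.span ℤ
          {x : FreeAlgebra ℤ (Fin r) | ∃ l, IsBasicProduct H wl.length l ∧
            x = (l.map (evalA deg)).prod} := by
      intro wl
      induction wl with
      | nil => intro h; exact absurd rfl h
      | cons x w' ihw =>
        intro _
        cases w' with
        | nil =>
          refine Submodule.subset_span ⟨[FreeMagma.of x], ⟨by simp, ?_, by simp [List.Chain'], by
            simp [FreeMagma.wt]⟩, by simp [evalA]⟩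
          intro t ht
          simp only [List.mem_singleton] at ht
          subst ht
          exact H.of_mem x
        | cons x₂ w'' =>
          have ih := ihw (by simp)
          rw [List.map_cons, List.prod_cons]
          refine mul_left_mem_span _ _ _ ?_ _ ih
          rintro y ⟨l, hl, rfl⟩
          have h2 := claim2 H deg l (FreeMagma.of x) (H.of_mem x) hl.2.1 hl.2.2.1
            (fun e f hef => by cases hef)
          rw [show (FreeMagma.of x).wt + (l.map FreeMagma.wt).sum
            = (x :: x₂ :: w'').length by
              have := hl.2.2.2
              simp only [List.length_cons] at *
              simp [FreeMagma.wt, this]; omega] at h2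
          have h2' : FreeAlgebra.ι ℤ x * (l.map (evalA deg)).prod ∈
              Submodule.span ℤ (BPset H deg (x :: x₂ :: w'').length
                (fun h => H.le (FreeMagma.of x) h ∨
                  ∃ g, l.head? = some g ∧ H.le g h)) := h2
          refine Submodule.span_mono ?_ h2'
          rintro z ⟨l', hl', _, rfl⟩
          exact ⟨l', hl', rfl⟩
    rw [freeAlgDeg, Submodule.span_le]
    rintro x ⟨w, rfl⟩
    have := main (List.ofFn w) (by
      have : (List.ofFn w).length = n := by simp
      intro h; rw [h] at this; simp at this; omega)
    rw [List.length_ofFn] at this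
    rw [show (List.ofFn fun i => FreeAlgebra.ι ℤ (w i))
      = ((List.ofFn w).map (fun a => FreeAlgebra.ι ℤ a)) from by rw [List.map_ofFn]; rfl]
    exact this

end HallAux

/-- In the free associative superalgebra over `ℤ` on `r` homogeneous generators, for
each `n ≥ 1` there are exactly `r^n` basic products of weight `n`, and their values
span the word-length-`n` component `A_n`. -/
theorem basic_products_card_and_span (r : ℕ) (deg : Fin r → ZMod 2)
    (H : HallData (Fin r)) (n : ℕ) (hn : 1 ≤ n) :
    Nat.card {l : List (FreeMagma (Fin r)) // IsBasicProduct H n l} = r ^ n ∧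
    Submodule.span ℤ
        {x : FreeAlgebra ℤ (Fin r) | ∃ l, IsBasicProduct H n l ∧ x = (l.map (evalA deg)).prod}
      = freeAlgDeg r n :=
  ⟨HallAux.card_basicProducts r n hn H, HallAux.span_eq r n hn deg H⟩
end
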